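/- arXiv:1607.08226 — 7 statements merged into one kernel-verified Lean document; each statement's English description precedes it below -/
import Mathlib

section
/- Let s = s₀...sₙ be a path-unique state sequence. If i ≤ j and t > 0 are integers with i + t ≤ n, j + t ≤ n, s_i = s_{i+t} and s_j = s_{j+t}, then s_j ∈ {s_i, s_{i+1}, ..., s_{i+t}}. -/
variable {σ : Type*}

/-- The edge relation of the abstract NFA induced by the state sequence `s₀…sₙ`. -/
def InducedEdge (n : ℕ) (s : ℕ → σ) (a b : σ) : Prop :=
  ∃ i < n, s i = a ∧ s (i + 1) = b

/-- The state sequence `s₀…sₙ` is path-unique: the only path of length `n` from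
`s₀` to `sₙ` in the induced abstract NFA is `s` itself. -/
def PathUnique (n : ℕ) (s : ℕ → σ) : Prop :=
  ∀ p : ℕ → σ, p 0 = s 0 → p n = s n →
    (∀ i < n, InducedEdge n s (p i) (p (i + 1))) → ∀ i ≤ n, p i = s i

/-- if `s` is path-unique, `i ≤ j`, `t > 0`, `s_i = s_{i+t}` and
`s_j = s_{j+t}`, then `s_j ∈ {s_i, …, s_{i+t}}`. -/
theorem stmt_4 (n : ℕ) (s : ℕ → σ) (hs : PathUnique n s)
    (i j t : ℕ) (hij : i ≤ j) (ht : 0 < t) (hin : i + t ≤ n) (hjn : j + t ≤ n)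
    (hi : s i = s (i + t)) (hj : s j = s (j + t)) :
    ∃ d ≤ t, s j = s (i + d) := by
  classical
  set p : ℕ → σ := fun k => if i ≤ k ∧ k ≤ j then s (k + t) else s k with hp
  have hpin : ∀ k, i ≤ k → k ≤ j → p k = s (k + t) := by
    intro k h1 h2; simp only [hp]; rw [if_pos ⟨h1, h2⟩]
  have hpout : ∀ k, ¬(i ≤ k ∧ k ≤ j) → p k = s k := by
    intro k h; simp only [hp]; rw [if_neg h]
  have hpeqs : ∀ k, (i ≤ k ∧ k ≤ j) → s (k + t) = s k → p k = s k := by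
    intro k h he; rw [hpin k h.1 h.2, he]
  have hp0 : p 0 = s 0 := by
    by_cases h : i ≤ 0 ∧ 0 ≤ j
    · have hi0 : i = 0 := by omega
      rw [hpin 0 h.1 h.2]
      subst hi0
      simpa using hi.symm
    · exact hpout 0 h
  have hpn : p n = s n := by
    apply hpout
    intro ⟨_, h2⟩; omega
  have hedge : ∀ k < n, InducedEdge n s (p k) (p (k + 1)) := by
    intro k hk
    rcases lt_or_ge k i with hki | hki
    · -- k < i : p k = s k; p (k+1) = s (k+1) (using hi if k+1 = i)
      have h1 : p k = s k := hpout k (by omega)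
      have h2 : p (k + 1) = s (k + 1) := by
        by_cases h : i ≤ k + 1 ∧ k + 1 ≤ j
        · have : k + 1 = i := by omega
          rw [hpin _ h.1 h.2, this, ← hi]
        · exact hpout _ h
      exact ⟨k, hk, h1.symm, h2.symm⟩
    · rcases lt_or_ge k j with hkj | hkj
      · -- i ≤ k < j : shifted edge
        have h1 : p k = s (k + t) := hpin k hki (le_of_lt hkj)
        have h2 : p (k + 1) = s (k + 1 + t) := hpin (k + 1) (by omega) (by omega)
        refine ⟨k + t, by omega, h1.symm, ?_⟩
        rw [h2]; ring_nf
      · -- k ≥ j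
        have h1 : p k = s k := by
          by_cases h : i ≤ k ∧ k ≤ j
          · have : k = j := by omega
            rw [hpin _ h.1 h.2, this, ← hj]
          · exact hpout _ h
        have h2 : p (k + 1) = s (k + 1) := hpout _ (by omega)
        exact ⟨k, hk, h1.symm, h2.symm⟩
  have key : ∀ k, i ≤ k → k ≤ j → s (k + t) = s k := by
    intro k h1 h2
    have := hs p hp0 hpn hedge k (by omega)
    rw [hpin k h1 h2] at this
    exact this
  -- periodicity
  have per : ∀ m, i + m ≤ j → s (i + m) = s (i + m % t) := by
    intro m
    induction m using Nat.strong_induction_on with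
    | _ m ih =>
      intro hm
      rcases lt_or_ge m t with hmt | hmt
      · rw [Nat.mod_eq_of_lt hmt]
      · have h1 : i + (m - t) + t = i + m := by omega
        have h2 : s (i + (m - t)) = s (i + (m - t) % t) := ih (m - t) (by omega) (by omega)
        have h3 : s (i + (m - t) + t) = s (i + (m - t)) := key (i + (m - t)) (by omega) (by omega)
        rw [← h1, h3, h2, Nat.mod_eq_sub_mod hmt]
  refine ⟨(j - i) % t, le_of_lt (Nat.mod_lt _ ht), ?_⟩
  have := per (j - i) (by omega)
  rw [show i + (j - i) = j by omega] at this
  exact this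
end

section
/- Let s be a path-unique state sequence. For each positive integer t, at most t distinct states of s have period exactly t. -/
variable {σ : Type*}

/-- The period of a state `q` in the state sequence `s₀…sₙ`:
`min {k − j : s_k = s_j = q, j < k}` if `q` occurs at least twice, `∞` otherwise. -/
noncomputable def statePeriod (n : ℕ) (s : ℕ → σ) (q : σ) : ℕ∞ :=
  sInf {t : ℕ∞ | ∃ j k : ℕ, j < k ∧ k ≤ n ∧ s j = q ∧ s k = q ∧ ((k - j : ℕ) : ℕ∞) = t}

/-- Key lemma: if two returns at distance `t` start at indices congruent mod `t`,
then in a path-unique sequence the two states coincide. -/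
theorem key_lemma (n : ℕ) (s : ℕ → σ) (hs : PathUnique n s) (t : ℕ) (ht : 0 < t)
    (j j' : ℕ) (hjj' : j ≤ j') (h1 : j + t ≤ n) (h2 : j' + t ≤ n)
    (e1 : s (j + t) = s j) (e2 : s (j' + t) = s j')
    (hmod : j % t = j' % t) : s j' = s j := by
  classical
  set p : ℕ → σ := fun i => if j ≤ i ∧ i ≤ j' then s (i + t) else s i with hp_def
  have hpi : ∀ i, i < j → p i = s i := by
    intro i hi; simp only [hp_def]; rw [if_neg]; omega
  have hpm : ∀ i, j ≤ i → i ≤ j' → p i = s (i + t) := by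
    intro i h1i h2i; simp only [hp_def]; rw [if_pos ⟨h1i, h2i⟩]
  have hpe : ∀ i, j' < i → p i = s i := by
    intro i hi; simp only [hp_def]; rw [if_neg]; omega
  have hp0 : p 0 = s 0 := by
    rcases Nat.eq_zero_or_pos j with hj0 | hj0
    · rw [hpm 0 (by omega) (by omega)]
      subst hj0; simpa using e1
    · exact hpi 0 hj0
  have hpn : p n = s n := hpe n (by omega)
  have hedges : ∀ i < n, InducedEdge n s (p i) (p (i + 1)) := by
    intro i hi
    rcases lt_or_ge i j with hij | hij
    · -- i < j
      have hpi' : p i = s i := hpi i hij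
      have hpi1 : p (i + 1) = s (i + 1) := by
        rcases lt_or_ge (i + 1) j with h | h
        · exact hpi (i + 1) h
        · have : i + 1 = j := by omega
          rw [hpm (i + 1) h (by omega), this, e1]
      exact ⟨i, hi, hpi'.symm, hpi1.symm⟩
    · rcases le_or_gt (i + 1) j' with hij' | hij'
      · -- j ≤ i, i + 1 ≤ j'
        refine ⟨i + t, by omega, ?_, ?_⟩
        · rw [hpm i hij (by omega)]
        · rw [hpm (i + 1) (by omega) hij']; ring_nf
      · rcases le_or_gt i j' with hle | hlt
        · -- i = j'
          have : i = j' := by omega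
          refine ⟨i, hi, ?_, ?_⟩
          · rw [hpm i hij hle, this, e2]
          · rw [hpe (i + 1) (by omega)]
        · exact ⟨i, hi, (hpe i hlt).symm, (hpe (i + 1) (by omega)).symm⟩
  have hp := hs p hp0 hpn hedges
  have claim : ∀ i, j ≤ i → i ≤ j' → s (i + t) = s i := by
    intro i h1i h2i
    have h := hp i (by omega)
    rw [hpm i h1i h2i] at h
    exact h
  obtain ⟨m, hm⟩ := (Nat.modEq_iff_dvd' hjj').mp hmod
  have step : ∀ k, j + t * k ≤ j' → s (j + t * k) = s j := by
    intro k
    induction k with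
    | zero => intro _; simp
    | succ k ih =>
      intro hk
      have hmul : t * k ≤ t * (k + 1) := Nat.mul_le_mul_left _ (by omega)
      have h1k : j + t * k ≤ j' := by omega
      have : s (j + t * (k + 1)) = s (j + t * k) := by
        have := claim (j + t * k) (by omega) h1k
        rw [show j + t * k + t = j + t * (k + 1) by ring] at this
        exact this
      rw [this, ih h1k]
  have hj' : j' = j + t * m := by omega
  rw [hj']
  exact step m (by omega)

/-- in a path-unique state sequence, at most `t` distinct states
have period exactly `t`. -/
theorem stmt_5 (n : ℕ) (s : ℕ → σ) (hs : PathUnique n s) (t : ℕ) (ht : 0 < t) :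
    {q : σ | (∃ i ≤ n, s i = q) ∧ statePeriod n s q = (t : ℕ∞)}.ncard ≤ t := by
  classical
  set S := {q : σ | (∃ i ≤ n, s i = q) ∧ statePeriod n s q = (t : ℕ∞)} with hS
  have hwit : ∀ q ∈ S, ∃ j, j + t ≤ n ∧ s j = q ∧ s (j + t) = q := by
    intro q hq
    obtain ⟨_, hper⟩ := hq
    set T := {t' : ℕ∞ | ∃ j k : ℕ, j < k ∧ k ≤ n ∧ s j = q ∧ s k = q ∧ ((k - j : ℕ) : ℕ∞) = t'}
      with hT
    have hne : T.Nonempty := by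
      by_contra h
      rw [Set.not_nonempty_iff_eq_empty] at h
      rw [statePeriod, ← hT, h, sInf_empty] at hper
      exact (by simp : (⊤ : ℕ∞) ≠ (t : ℕ∞)) hper
    have hmem : (t : ℕ∞) ∈ T := by
      have := csInf_mem hne
      rwa [show sInf T = (t : ℕ∞) from hper] at this
    obtain ⟨j, k, hjk, hkn, hj, hk, heq⟩ := hmem
    have hkt : k - j = t := by exact_mod_cast heq
    refine ⟨j, by omega, hj, ?_⟩
    rw [show j + t = k by omega]
    exact hk
  choose! w hw1 hw2 hw3 using hwit
  have hinj : Set.InjOn (fun q => w q % t) S := by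
    intro q1 h1 q2 h2 heq
    simp only at heq
    rcases le_total (w q1) (w q2) with hle | hle
    · have := key_lemma n s hs t ht (w q1) (w q2) hle (hw1 q1 h1) (hw1 q2 h2)
        (by rw [hw3 q1 h1, hw2 q1 h1]) (by rw [hw3 q2 h2, hw2 q2 h2]) heq
      rw [hw2 q1 h1, hw2 q2 h2] at this
      exact this.symm
    · have := key_lemma n s hs t ht (w q2) (w q1) hle (hw1 q2 h2) (hw1 q1 h1)
        (by rw [hw3 q2 h2, hw2 q2 h2]) (by rw [hw3 q1 h1, hw2 q1 h1]) heq.symm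
      rw [hw2 q1 h1, hw2 q2 h2] at this
      exact this
  have hmaps : ∀ q ∈ S, w q % t ∈ (↑(Finset.range t) : Set ℕ) := by
    intro q hq
    simp [Nat.mod_lt _ ht]
  have := Set.ncard_le_ncard_of_injOn (fun q => w q % t) hmaps hinj (Finset.finite_toSet _)
  rwa [Set.ncard_coe_finset, Finset.card_range] at this
end

section
/- Let Λ be a k-stage CSR producing the infinite sequence x, and let P be the eventual period of the sequence of register states Λᵗ(x₀,...,x_{k-1}). If a word α of length a < P satisfies that α^u (u consecutive copies of α) occurs as a contiguous subsequence of x, then u ≤ ⌈k/a⌉. -/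
/-- `Λ` is a `q`-ary `k`-stage combinatorial shift register. -/
def IsCSR (q k : ℕ) (Λ : (Fin k → Fin q) → (Fin k → Fin q)) : Prop :=
  ∃ F : (Fin k → Fin q) → Fin q, ∀ v : Fin k → Fin q, ∀ i : Fin k,
    Λ v i = if h : (i : ℕ) + 1 < k then v ⟨(i : ℕ) + 1, h⟩ else F v

/-- The infinite sequence `x` is produced by `Λ`. -/
def Produces {q k : ℕ} (Λ : (Fin k → Fin q) → (Fin k → Fin q)) (x : ℕ → Fin q) : Prop :=
  ∀ n : ℕ, Λ^[n] (fun i : Fin k => x i) = fun i : Fin k => x (n + i)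

/-- `N` is an eventual period of the sequence `y`. -/
def IsEvPeriod {β : Type*} (y : ℕ → β) (N : ℕ) : Prop :=
  0 < N ∧ ∃ M : ℕ, ∀ n > M, y n = y (n - N)

/-- The eventual period of `y` : the least eventual period. -/
noncomputable def evPeriod {β : Type*} (y : ℕ → β) : ℕ :=
  sInf {N | IsEvPeriod y N}

/-- if `x` is produced by a `k`-stage CSR whose state orbit has
eventual period `P`, and a word `α` of length `a < P` has `α^u` occurring
contiguously in `x`, then `u ≤ ⌈k/a⌉`. -/
theorem stmt_7 (q k : ℕ) (Λ : (Fin k → Fin q) → (Fin k → Fin q))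
    (hΛ : IsCSR q k Λ) (x : ℕ → Fin q) (hx : Produces Λ x)
    (P : ℕ) (hP : P = evPeriod (fun t => Λ^[t] (fun i : Fin k => x i)))
    (a u : ℕ) (ha : 0 < a) (haP : a < P)
    (j : ℕ) (hocc : ∀ m < u * a, x (j + m) = x (j + m % a)) :
    u ≤ (k + a - 1) / a := by
  by_contra h
  push_neg at h
  -- From u > ⌈k/a⌉ we get k + a ≤ u * a
  have hd := Nat.div_add_mod (k + a - 1) a
  have hr := Nat.mod_lt (k + a - 1) ha
  have hmul : ((k + a - 1) / a + 1) * a ≤ u * a := Nat.mul_le_mul_right a h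
  have hkua : k + a ≤ u * a := by
    have hexp : ((k + a - 1) / a + 1) * a = a * ((k + a - 1) / a) + a := by ring
    omega
  -- states at times j and j + a coincide
  set s0 : Fin k → Fin q := fun i : Fin k => x i with hs0
  have hstate : Λ^[j + a] s0 = Λ^[j] s0 := by
    rw [hx (j + a), hx j]
    funext i
    have hik : (i : ℕ) < k := i.isLt
    have h1 : x (j + (a + i)) = x (j + (a + i) % a) :=
      hocc (a + i) (by omega)
    have h2 : x (j + (i : ℕ)) = x (j + (i : ℕ) % a) :=
      hocc i (by omega)
    have hmod : (a + (i : ℕ)) % a = (i : ℕ) % a := Nat.add_mod_left a i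
    show x (j + a + (i : ℕ)) = x (j + (i : ℕ))
    rw [add_assoc, h1, hmod, ← h2]
  -- hence a is an eventual period of the state orbit
  have hmem : IsEvPeriod (fun t => Λ^[t] s0) a := by
    refine ⟨ha, j + a, fun n hn => ?_⟩
    have h1 : n = (n - j - a) + (j + a) := by omega
    have h2 : n - a = (n - j - a) + j := by omega
    calc Λ^[n] s0 = Λ^[n - j - a] (Λ^[j + a] s0) := by
            rw [← Function.iterate_add_apply, ← h1]
      _ = Λ^[n - j - a] (Λ^[j] s0) := by rw [hstate]
      _ = Λ^[n - a] s0 := by rw [← Function.iterate_add_apply, ← h2]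
  have hle : P ≤ a := hP ▸ Nat.sInf_le hmem
  omega
end

section
/- If (u−1)·a ≥ k and a word of the form y₁...y_a repeated u times occurs as a contiguous block starting at position j in a sequence x produced by a k-stage CSR Λ, then the state orbit Λᵗ(x₀,...,x_{k-1}) satisfies Λ^{j+a}(x₀,...,x_{k-1}) = Λ^j(x₀,...,x_{k-1}), so the eventual period of the orbit is at most a. -/
/-- if a block `(y₁…y_a)^u` with `(u−1)·a ≥ k` occurs at position `j`
in a sequence produced by a `k`-stage CSR, then `Λ^{j+a}(x₀,…,x_{k-1}) = Λ^j(x₀,…,x_{k-1})`,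
so the eventual period of the state orbit is at most `a`. -/
theorem stmt_8 (q k : ℕ) (hk : 0 < k) (Λ : (Fin k → Fin q) → (Fin k → Fin q))
    (hΛ : IsCSR q k Λ) (x : ℕ → Fin q) (hx : Produces Λ x)
    (a u j : ℕ) (hua : (u - 1) * a ≥ k)
    (hocc : ∀ m < u * a, x (j + m) = x (j + m % a)) :
    Λ^[j + a] (fun i : Fin k => x i) = Λ^[j] (fun i : Fin k => x i) ∧
      ∃ N ≤ a, IsEvPeriod (fun t => Λ^[t] (fun i : Fin k => x i)) N := by
  have ha : 0 < a := by
    rcases Nat.eq_zero_or_pos a with h | h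
    · subst h; simp at hua; omega
    · exact h
  have hu : 1 ≤ u := by
    rcases Nat.eq_zero_or_pos u with h | h
    · subst h; simp at hua; omega
    · exact h
  have key : Λ^[j + a] (fun i : Fin k => x i) = Λ^[j] (fun i : Fin k => x i) := by
    rw [hx (j + a), hx j]
    funext i
    have hik : (i : ℕ) < k := i.isLt
    have h1 : a + (i : ℕ) < u * a := by
      have : (i : ℕ) < (u - 1) * a := lt_of_lt_of_le hik hua
      have : a + (i : ℕ) < a + (u - 1) * a := by omega
      obtain ⟨v, rfl⟩ : ∃ v, u = v + 1 := ⟨u - 1, by omega⟩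
      simp only [Nat.add_sub_cancel] at this ⊢
      rw [Nat.succ_mul]
      omega
    have h2 : (i : ℕ) < u * a := by omega
    have e1 := hocc (a + i) h1
    have e2 := hocc i h2
    have hmod : (a + (i : ℕ)) % a = (i : ℕ) % a := Nat.add_mod_left a i
    rw [hmod] at e1
    have : j + a + (i : ℕ) = j + (a + (i : ℕ)) := by omega
    rw [this, e1, e2]
  refine ⟨key, a, le_refl a, ha, j + a, fun n hn => ?_⟩
  have h1 : n = (n - (j + a)) + (j + a) := by omega
  have h2 : n - a = (n - (j + a)) + j := by omega
  calc Λ^[n] (fun i : Fin k => x i)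
      = Λ^[n - (j + a)] (Λ^[j + a] (fun i : Fin k => x i)) := by
        rw [← Function.iterate_add_apply, ← h1]
    _ = Λ^[n - (j + a)] (Λ^[j] (fun i : Fin k => x i)) := by rw [key]
    _ = Λ^[n - a] (fun i : Fin k => x i) := by
        rw [← Function.iterate_add_apply, ← h2]
end

section
/- For every binary sequence x of length n, the nondeterministic automatic complexity satisfies A_N(x) ≤ ⌊n/2⌋ + 1. -/
section AN
variable {α : Type*}

/-- `p` is an accepting path of length `n` for the word `y` in the NFA with
transition relation `δ`, initial state `init` and accepting states `acc`. -/
def NFAPath {σ : Type*} (δ : σ → α → σ → Prop) (init : σ) (acc : Set σ)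
    (n : ℕ) (y : ℕ → α) (p : ℕ → σ) : Prop :=
  p 0 = init ∧ p n ∈ acc ∧ ∀ i < n, δ (p i) (y i) (p (i + 1))

/-- There is an NFA with `m` states accepting the length-`n` word `x` with a
unique accepting path of length `n`. -/
def ANWitness (m n : ℕ) (x : ℕ → α) : Prop :=
  ∃ (δ : Fin m → α → Fin m → Prop) (init : Fin m) (acc : Set (Fin m)),
    (∃ p, NFAPath δ init acc n x p) ∧
    ∀ y₁ p₁ y₂ p₂, NFAPath δ init acc n y₁ p₁ → NFAPath δ init acc n y₂ p₂ →
      (∀ i < n, y₁ i = y₂ i) ∧ (∀ i ≤ n, p₁ i = p₂ i)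

/-- The nondeterministic automatic complexity of the length-`n` word `x`. -/
noncomputable def AN (n : ℕ) (x : ℕ → α) : ℕ := sInf {m | ANWitness m n x}

end AN

/-- The canonical path in Hyde's construction: go up `0,1,...,k`, loop once at
`k` (when needed), come back down. As a value in `Fin (n/2+1)`. -/
def hydeP (n i : ℕ) : Fin (n / 2 + 1) := ⟨min i (2 * (n / 2) + 1 - i), by omega⟩

/-- Hyde's transition relation: exactly the edges used by the canonical path. -/
def hydeDel (n : ℕ) (x : ℕ → Fin 2) : Fin (n / 2 + 1) → Fin 2 → Fin (n / 2 + 1) → Prop :=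
  fun q a q' => ∃ i, i < n ∧ q = hydeP n i ∧ a = x i ∧ q' = hydeP n (i + 1)

lemma hyde_canon (n : ℕ) (x : ℕ → Fin 2) :
    NFAPath (hydeDel n x) (hydeP n 0) {hydeP n n} n x (fun i => hydeP n i) :=
  ⟨rfl, rfl, fun i hi => ⟨i, hi, rfl, rfl, rfl⟩⟩

/-- Rigidity: any walk of length `n` from `0` to `2k+1-n` whose steps are
unit steps up/down or a loop at `k` must be the canonical walk. -/
lemma hyde_rigid (n k : ℕ) (hk : k = n / 2) (hn : 1 ≤ n) (q : ℕ → ℕ)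
    (h0 : q 0 = 0) (hlast : q n = 2 * k + 1 - n)
    (hstep : ∀ j, j < n →
      q (j + 1) ≤ q j + 1 ∧ q j ≤ q (j + 1) + 1 ∧ (q (j + 1) = q j → q j = k)) :
    ∀ j, j ≤ n → q j = min j (2 * k + 1 - j) := by
  have hn2 : n ≤ 2 * k + 1 := by omega
  have hn2' : 2 * k ≤ n := by omega
  -- upper bound from the start
  have hub1 : ∀ j, j ≤ n → q j ≤ j := by
    intro j
    induction j with
    | zero => intro _; omega
    | succ m ih =>
      intro h
      have h1 := hstep m (by omega)
      have h2 := ih (by omega)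
      omega
  -- upper bound from the end
  have hub2 : ∀ j, j ≤ n → q j ≤ 2 * k + 1 - j := by
    have main : ∀ m, ∀ j, j ≤ n → n - j ≤ m → q j ≤ 2 * k + 1 - j := by
      intro m
      induction m with
      | zero =>
        intro j hj hm
        have : j = n := by omega
        subst this; omega
      | succ m ih =>
        intro j hj hm
        by_cases hjn : j = n
        · subst hjn; omega
        · have h1 := ih (j + 1) (by omega) (by omega)
          have h2 := hstep j (by omega)
          omega
    intro j hj; exact main n j hj (by omega)
  -- there is a loop step, and it is at time k, state k
  have hloop : ∃ t, t < n ∧ q (t + 1) = q t := by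
    by_contra hc
    push_neg at hc
    have hpar : ∀ j, j ≤ n → (q j + j) % 2 = 0 := by
      intro j
      induction j with
      | zero => intro _; omega
      | succ m ih =>
        intro h
        have h1 := hstep m (by omega)
        have h2 := hc m (by omega)
        have h3 := ih (by omega)
        omega
    have := hpar n le_rfl
    omega
  obtain ⟨t, ht, hq⟩ := hloop
  have htk : q t = k := (hstep t ht).2.2 hq
  have h1 := hub1 t (le_of_lt ht)
  have h2 := hub2 t (le_of_lt ht)
  have h3 := hub1 (t + 1) ht
  have h4 := hub2 (t + 1) ht
  have htt : t = k := by omega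
  rw [htt] at hq htk
  have qk : q k = k := htk
  have qk1 : q (k + 1) = k := hq.trans htk
  -- downward phase
  have hdown : ∀ d, d ≤ k → q (k - d) = k - d := by
    intro d
    induction d with
    | zero => intro _; simpa using qk
    | succ d ih =>
      intro h
      have hlt : k - (d + 1) < n := by omega
      have h1 := hstep (k - (d + 1)) hlt
      have e : k - (d + 1) + 1 = k - d := by omega
      rw [e] at h1
      have h2 := ih (by omega)
      have h3 := hub1 (k - (d + 1)) (by omega)
      omega
  -- upward phase
  have hup : ∀ d, k + 1 + d ≤ n → q (k + 1 + d) = k - d := by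
    intro d
    induction d with
    | zero => intro _; simpa using qk1
    | succ d ih =>
      intro h
      have h1 := hstep (k + 1 + d) (by omega)
      have e : k + 1 + d + 1 = k + 1 + (d + 1) := by omega
      rw [e] at h1
      have h2 := ih (by omega)
      have h3 := hub2 (k + 1 + (d + 1)) (by omega)
      omega
  intro j hj
  rcases le_or_gt j k with hjk | hjk
  · have h := hdown (k - j) (by omega)
    have e : k - (k - j) = j := by omega
    rw [e] at h
    omega
  · have h := hup (j - (k + 1)) (by omega)
    have e : k + 1 + (j - (k + 1)) = j := by omega
    rw [e] at h
    omega

/-- Any accepting path in Hyde's automaton is the canonical one. -/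
lemma hyde_unique (n : ℕ) (x : ℕ → Fin 2) (y : ℕ → Fin 2) (p : ℕ → Fin (n / 2 + 1))
    (h : NFAPath (hydeDel n x) (hydeP n 0) {hydeP n n} n y p) :
    (∀ i < n, y i = x i) ∧ (∀ i ≤ n, p i = hydeP n i) := by
  obtain ⟨h0, hacc, hs⟩ := h
  rcases Nat.eq_zero_or_pos n with hn | hn
  · subst hn
    refine ⟨fun i hi => absurd hi (by omega), fun i hi => ?_⟩
    have : i = 0 := by omega
    subst this; exact h0
  · have hn2 : n ≤ 2 * (n / 2) + 1 := by omega
    have hn2' : 2 * (n / 2) ≤ n := by omega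
    rw [Set.mem_singleton_iff] at hacc
    have key : ∀ j, j ≤ n → ((p j : Fin (n / 2 + 1)) : ℕ) = min j (2 * (n / 2) + 1 - j) := by
      refine hyde_rigid n (n / 2) rfl hn (fun j => (p j : ℕ)) ?_ ?_ ?_
      · show ((p 0 : Fin (n / 2 + 1)) : ℕ) = 0
        rw [h0]; rfl
      · show ((p n : Fin (n / 2 + 1)) : ℕ) = 2 * (n / 2) + 1 - n
        rw [hacc]
        show min n (2 * (n / 2) + 1 - n) = 2 * (n / 2) + 1 - n
        omega
      · intro j hj
        obtain ⟨i, hi, e1, _, e3⟩ := hs j hj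
        have v1 : ((p j : Fin (n / 2 + 1)) : ℕ) = min i (2 * (n / 2) + 1 - i) := by
          rw [e1]; rfl
        have v2 : ((p (j + 1) : Fin (n / 2 + 1)) : ℕ)
            = min (i + 1) (2 * (n / 2) + 1 - (i + 1)) := by
          rw [e3]; rfl
        show (p (j + 1) : ℕ) ≤ (p j : ℕ) + 1 ∧ (p j : ℕ) ≤ (p (j + 1) : ℕ) + 1 ∧
          ((p (j + 1) : ℕ) = (p j : ℕ) → (p j : ℕ) = n / 2)
        refine ⟨by omega, by omega, fun hq => by omega⟩
    have keyP : ∀ j, j ≤ n → p j = hydeP n j := by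
      intro j hj
      have h := key j hj
      apply Fin.ext
      rw [h]; rfl
    refine ⟨fun j hj => ?_, keyP⟩
    obtain ⟨i, hi, e1, e2, e3⟩ := hs j hj
    have v1 : min j (2 * (n / 2) + 1 - j) = min i (2 * (n / 2) + 1 - i) := by
      have h := key j (le_of_lt hj)
      rw [e1] at h
      exact h.symm.trans rfl
    have v2 : min (j + 1) (2 * (n / 2) + 1 - (j + 1))
        = min (i + 1) (2 * (n / 2) + 1 - (i + 1)) := by
      have h := key (j + 1) hj
      rw [e3] at h
      exact h.symm.trans rfl
    have : i = j := by omega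
    subst this
    exact e2

/-- Hyde: `A_N(x) ≤ ⌊n/2⌋ + 1` for every binary word of length `n`. -/
theorem stmt_9 (n : ℕ) (x : ℕ → Fin 2) : AN n x ≤ n / 2 + 1 := by
  have hw : ANWitness (n / 2 + 1) n x := by
    refine ⟨hydeDel n x, hydeP n 0, {hydeP n n}, ⟨_, hyde_canon n x⟩, ?_⟩
    intro y₁ p₁ y₂ p₂ h₁ h₂
    obtain ⟨hy₁, hp₁⟩ := hyde_unique n x y₁ p₁ h₁
    obtain ⟨hy₂, hp₂⟩ := hyde_unique n x y₂ p₂ h₂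
    exact ⟨fun i hi => (hy₁ i hi).trans (hy₂ i hi).symm,
      fun i hi => (hp₁ i hi).trans (hp₂ i hi).symm⟩
  exact Nat.sInf_le hw
end

section
/- If a path-unique state sequence s corresponds (as the accepting path of an NFA) to a square-free word x, then each state occurs at most twice in s. -/
lemma three_sorted {P : ℕ → Prop} {a b c : ℕ} (ha : P a) (hb : P b) (hc : P c)
    (hab : a ≠ b) (hac : a ≠ c) (hbc : b ≠ c) :
    ∃ i1 i2 i3, i1 < i2 ∧ i2 < i3 ∧ P i1 ∧ P i2 ∧ P i3 := by
  rcases Nat.lt_or_ge a b with h | h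
  · rcases Nat.lt_or_ge b c with h2 | h2
    · exact ⟨a, b, c, h, h2, ha, hb, hc⟩
    · rcases Nat.lt_or_ge a c with h3 | h3
      · exact ⟨a, c, b, h3, by omega, ha, hc, hb⟩
      · exact ⟨c, a, b, by omega, h, hc, ha, hb⟩
  · rcases Nat.lt_or_ge a c with h2 | h2
    · exact ⟨b, a, c, by omega, h2, hb, ha, hc⟩
    · rcases Nat.lt_or_ge b c with h3 | h3
      · exact ⟨b, c, a, h3, by omega, hb, hc, ha⟩
      · exact ⟨c, b, a, by omega, by omega, hc, hb, ha⟩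

/-- if the word `x` of length `n` is square-free and `s` is the
unique accepting path of length `n` of an NFA accepting `x`, then each state
occurs at most twice in `s`. -/
theorem stmt_12 {α σ : Type*} (n : ℕ) (x : ℕ → α)
    (hsf : ¬ ∃ j a, 0 < a ∧ j + 2 * a ≤ n ∧ ∀ m < a, x (j + m) = x (j + a + m))
    (δ : σ → α → σ → Prop) (init : σ) (acc : Set σ) (s : ℕ → σ)
    (hacc : NFAPath δ init acc n x s)
    (huniq : ∀ y p, NFAPath δ init acc n y p →
      (∀ i < n, y i = x i) ∧ (∀ i ≤ n, p i = s i)) :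
    ∀ st : σ, {i | i ≤ n ∧ s i = st}.ncard ≤ 2 := by
  intro st
  by_contra hcon
  push_neg at hcon
  have hfin : {i : ℕ | i ≤ n ∧ s i = st}.Finite :=
    Set.Finite.subset (Set.finite_Iic n) (fun i hi => hi.1)
  rw [Set.two_lt_ncard hfin] at hcon
  obtain ⟨a0, ha0, b0, hb0, c0, hc0, hab, hac, hbc⟩ := hcon
  obtain ⟨i1, i2, i3, h12, h23, hP1, hP2, hP3⟩ :=
    three_sorted ha0 hb0 hc0 hab hac hbc
  obtain ⟨h0, hn, hstep⟩ := hacc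
  have hi3n : i3 ≤ n := hP3.1
  have e12 : s i1 = s i2 := hP1.2.trans hP2.2.symm
  have e13 : s i1 = s i3 := hP1.2.trans hP3.2.symm
  have e23 : s i2 = s i3 := hP2.2.trans hP3.2.symm
  set a := i2 - i1 with ha_def
  set b := i3 - i2 with hb_def
  have ha : 0 < a := by omega
  have hb : 0 < b := by omega
  have hi2 : i2 = i1 + a := by omega
  have hi3 : i3 = i1 + b + a := by omega
  set y' : ℕ → α := fun t =>
    if t < i1 then x t
    else if t < i1 + b then x (i2 + (t - i1))
    else if t < i3 then x (i1 + (t - (i1 + b)))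
    else x t with hy'_def
  set p' : ℕ → σ := fun t =>
    if t ≤ i1 then s t
    else if t ≤ i1 + b then s (i2 + (t - i1))
    else if t ≤ i3 then s (i1 + (t - (i1 + b)))
    else s t with hp'_def
  have hpA : ∀ u, u ≤ i1 → p' u = s u := by
    intro u hu; simp only [hp'_def]; rw [if_pos hu]
  have hpB : ∀ u, i1 ≤ u → u ≤ i1 + b → p' u = s (i2 + (u - i1)) := by
    intro u h1 h2
    simp only [hp'_def]
    rcases Nat.eq_or_lt_of_le h1 with he | he
    · rw [if_pos (by omega), ← he, show i2 + (i1 - i1) = i2 by omega]; exact e12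
    · rw [if_neg (by omega), if_pos h2]
  have hpC : ∀ u, i1 + b ≤ u → u ≤ i3 → p' u = s (i1 + (u - (i1 + b))) := by
    intro u h1 h2
    simp only [hp'_def]
    rcases Nat.eq_or_lt_of_le h1 with he | he
    · rw [if_neg (by omega), if_pos (by omega),
        show i2 + (u - i1) = i3 by omega, show i1 + (u - (i1 + b)) = i1 by omega]
      exact e13.symm
    · rw [if_neg (by omega), if_neg (by omega), if_pos h2]
  have hpD : ∀ u, i3 ≤ u → p' u = s u := by
    intro u h1
    simp only [hp'_def]
    rcases Nat.eq_or_lt_of_le h1 with he | he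
    · rw [if_neg (by omega), if_neg (by omega), if_pos (by omega),
        show i1 + (u - (i1 + b)) = i2 by omega, ← he]
      exact e23
    · rw [if_neg (by omega), if_neg (by omega), if_neg (by omega)]
  have hyA : ∀ u, u < i1 → y' u = x u := by
    intro u hu; simp only [hy'_def]; rw [if_pos hu]
  have hyB : ∀ u, i1 ≤ u → u < i1 + b → y' u = x (i2 + (u - i1)) := by
    intro u h1 h2; simp only [hy'_def]; rw [if_neg (by omega), if_pos h2]
  have hyC : ∀ u, i1 + b ≤ u → u < i3 → y' u = x (i1 + (u - (i1 + b))) := by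
    intro u h1 h2; simp only [hy'_def]
    rw [if_neg (by omega), if_neg (by omega), if_pos h2]
  have hyD : ∀ u, i3 ≤ u → y' u = x u := by
    intro u h1; simp only [hy'_def]
    rw [if_neg (by omega), if_neg (by omega), if_neg (by omega)]
  have hpath : NFAPath δ init acc n y' p' := by
    refine ⟨?_, ?_, ?_⟩
    · rw [hpA 0 (Nat.zero_le _)]; exact h0
    · rw [hpD n hi3n]; exact hn
    · intro t ht
      rcases Nat.lt_or_ge t i1 with hc1 | hc1
      · rw [hpA t (by omega), hyA t hc1, hpA (t + 1) (by omega)]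
        exact hstep t (by omega)
      · rcases Nat.lt_or_ge t (i1 + b) with hc2 | hc2
        · rw [hpB t (by omega) (by omega), hyB t (by omega) hc2,
            hpB (t + 1) (by omega) (by omega),
            show i2 + (t + 1 - i1) = i2 + (t - i1) + 1 by omega]
          exact hstep (i2 + (t - i1)) (by omega)
        · rcases Nat.lt_or_ge t i3 with hc3 | hc3
          · rw [hpC t (by omega) (by omega), hyC t (by omega) hc3,
              hpC (t + 1) (by omega) (by omega),
              show i1 + (t + 1 - (i1 + b)) = i1 + (t - (i1 + b)) + 1 by omega]
            exact hstep (i1 + (t - (i1 + b))) (by omega)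
          · rw [hpD t hc3, hyD t hc3, hpD (t + 1) (by omega)]
            exact hstep t ht
  have hy := (huniq y' p' hpath).1
  have rel1 : ∀ t < b, x (i1 + t) = x (i2 + t) := by
    intro t htb
    have h1 := hy (i1 + t) (by omega)
    rw [hyB (i1 + t) (by omega) (by omega), show i2 + (i1 + t - i1) = i2 + t by omega] at h1
    exact h1.symm
  have rel2 : ∀ t < a, x (i1 + b + t) = x (i1 + t) := by
    intro t hta
    have h1 := hy (i1 + b + t) (by omega)
    rw [hyC (i1 + b + t) (by omega) (by omega),
      show i1 + (i1 + b + t - (i1 + b)) = i1 + t by omega] at h1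
    exact h1.symm
  apply hsf
  refine ⟨i1, min a b, by omega, by omega, ?_⟩
  intro m hm
  rcases le_or_gt a b with hab2 | hab2
  · have := rel1 m (by omega)
    rwa [show i2 + m = i1 + min a b + m by omega] at this
  · have := rel2 m (by omega)
    rw [show i1 + b + m = i1 + min a b + m by omega] at this
    exact this.symm
end

section
/- Let x be an infinite sequence produced by a k-stage CSR whose state-orbit has eventual period P. If x contains a contiguous block of the form α^u with |α| = a and (u−1)a ≥ k, then the state orbit has eventual period at most a; in particular if a < P this is a contradiction, so u < k/a + 1. -/
/-- if `x` is produced by a `k`-stage CSR whose state orbit has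
eventual period `P`, and `x` contains a contiguous block `α^u` with `|α| = a`,
then: if `(u−1)a ≥ k` the orbit has an eventual period at most `a`; in
particular if `a < P` then `u < k/a + 1`, i.e. `u·a < k + a`. -/
theorem stmt_17 (q k : ℕ) (hk : 0 < k) (Λ : (Fin k → Fin q) → (Fin k → Fin q))
    (hΛ : IsCSR q k Λ) (x : ℕ → Fin q) (hx : Produces Λ x)
    (P : ℕ) (hP : P = evPeriod (fun t => Λ^[t] (fun i : Fin k => x i)))
    (a u j : ℕ) (ha : 0 < a)
    (hocc : ∀ m < u * a, x (j + m) = x (j + m % a)) :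
    ((u - 1) * a ≥ k → ∃ N ≤ a, IsEvPeriod (fun t => Λ^[t] (fun i : Fin k => x i)) N) ∧
      (a < P → u * a < k + a) := by
  have main : (u - 1) * a ≥ k →
      IsEvPeriod (fun t => Λ^[t] (fun i : Fin k => x i)) a := by
    intro hua
    have hu1 : 1 ≤ u := by
      by_contra h
      have : u = 0 := by omega
      simp [this] at hua
      omega
    have hmul : u * a = (u - 1) * a + a := by
      cases u with
      | zero => omega
      | succ n => simp [Nat.succ_sub_one, Nat.succ_mul]
    have hstep : Λ^[j + a] (fun i : Fin k => x i) = Λ^[j] (fun i : Fin k => x i) := by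
      rw [hx (j + a), hx j]
      funext i
      have hik : (i : ℕ) < k := i.isLt
      have h1 : x (j + (a + (i : ℕ))) = x (j + (a + (i : ℕ)) % a) :=
        hocc _ (by omega)
      have h2 : x (j + (i : ℕ)) = x (j + (i : ℕ) % a) := hocc _ (by omega)
      have h3 : (a + (i : ℕ)) % a = (i : ℕ) % a := Nat.add_mod_left a i
      show x (j + a + (i : ℕ)) = x (j + (i : ℕ))
      rw [show j + a + (i : ℕ) = j + (a + (i : ℕ)) by omega, h1, h3, ← h2]
    refine ⟨ha, j + a, fun n hn => ?_⟩
    have e1 : Λ^[n] (fun i : Fin k => x i)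
        = Λ^[n - (j + a)] (Λ^[j + a] (fun i : Fin k => x i)) := by
      rw [← Function.iterate_add_apply]
      congr 1
      omega
    have e2 : Λ^[n - a] (fun i : Fin k => x i)
        = Λ^[n - (j + a)] (Λ^[j] (fun i : Fin k => x i)) := by
      rw [← Function.iterate_add_apply]
      congr 1
      omega
    simp only [e1, e2, hstep]
  refine ⟨fun h => ⟨a, le_refl a, main h⟩, fun haP => ?_⟩
  by_contra h
  push_neg at h
  have hu1 : 1 ≤ u := by
    rcases Nat.eq_zero_or_pos u with h0 | h0
    · simp [h0] at h; omega
    · exact h0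
  have hua : (u - 1) * a ≥ k := by
    have : u * a = (u - 1) * a + a := by
      cases u with
      | zero => omega
      | succ n => simp [Nat.succ_sub_one, Nat.succ_mul]
    omega
  have := main hua
  have hle : evPeriod (fun t => Λ^[t] (fun i : Fin k => x i)) ≤ a :=
    Nat.sInf_le this
  omega
end
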